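/- Let z ∈ I_μ, and suppose r is a real eigenvalue of A(z) admitting an eigenvector R with all coordinates positive, normalized so that Σ_{i∈K} R_i = 1. Then the two quantities r − 1 and Σ_{i∈K} R_i ρ_i(z) − 1 have the same sign, meaning they are both negative, both null, or both positive. -/

import Mathlib

/-!
Summing the eigen-equation `A(z) R = r R` over the rows and using `∑ R_i = 1` gives
`r = ∑_j (∑_i A(z)_{ij}) R_j`, and the column sums of `A(z)` are the `ρ_j(z)` because
`∑_{i<k} y^i / (1 - y^k) = 1 / (1 - y)` pointwise. So `r = ∑ R_i ρ_i(z)` and the two quantities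
coincide. The analytic input is that `z ∈ I_μ` forces `z x < 1` for `q_j`-almost every `x`
(otherwise `∑ z^n ∫ x^n β_j dq_j` diverges) and makes `1 / (1 - z x)` integrable, its geometric
expansion having that series as integral.
-/

open MeasureTheory Matrix Filter

noncomputable section

/-- The maximum of the support (within `[0,1]`) of a measure `μ` on `ℝ`:
`sup {x ∈ [0,1] : μ([x,1]) > 0}`. -/
def etaSup (μ : Measure ℝ) : ℝ :=
  sSup {x | x ∈ Set.Icc (0:ℝ) 1 ∧ 0 < μ (Set.Icc x 1)}

/-- Membership in `I_μ`: `z ≥ 0` and `∑_{n≥0} z^n ∫ x^n β_j q_j(dx) < ∞` for every `j`. -/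
def memIm (k : ℕ) (β : Fin k → ℝ) (q : Fin k → Measure ℝ) (z : ℝ) : Prop :=
  0 ≤ z ∧ ∀ j : Fin k,
    (∑' n : ℕ, ENNReal.ofReal (z ^ n) * ∫⁻ x, ENNReal.ofReal (x ^ n * β j) ∂(q j)) < ⊤

/-- The matrix `A(z)` with entries `A(z)_{i,j} = μ_j^{[i−j]}(z)`, where
`μ_j^i(z) = ∫ (zx)^i / (1 − (zx)^k) β_j q_j(dx)`. -/
def Amat (k : ℕ) (β : Fin k → ℝ) (q : Fin k → Measure ℝ) (z : ℝ) :
    Matrix (Fin k) (Fin k) ℝ :=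
  Matrix.of fun i j =>
    ∫ x, (z * x) ^ (((i - j : Fin k) : ℕ)) / (1 - (z * x) ^ k) * β j ∂(q j)

/-- `ρ_j(z) = ∫ β_j q_j(dx) / (1 − z x)`. -/
def rhoFun (k : ℕ) (β : Fin k → ℝ) (q : Fin k → Measure ℝ) (z : ℝ) (j : Fin k) : ℝ :=
  ∫ x, β j / (1 - z * x) ∂(q j)

open Finset

theorem geom_sum_div_one_sub_pow {K : Type*} [Field K] {y : K} {k : ℕ} (hyk : y ^ k ≠ 1) :
    (∑ m ∈ range k, y ^ m) / (1 - y ^ k) = (1 - y)⁻¹ := by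
  have hyk' : 1 - y ^ k ≠ 0 := sub_ne_zero.2 (Ne.symm hyk)
  rw [← geom_sum_mul_neg y k] at hyk' ⊢
  rw [div_mul_cancel_left₀ (left_ne_zero_of_mul hyk')]

theorem Fin.sum_pow_sub_eq_sum_range {M : Type*} [Semiring M] {k : ℕ} [NeZero k] (y : M)
    (j : Fin k) :
    ∑ i : Fin k, y ^ ((i - j : Fin k) : ℕ) = ∑ m ∈ range k, y ^ m := by
  rw [← Fin.sum_univ_eq_sum_range]
  exact Fintype.sum_equiv (Equiv.subRight j) _ _ fun _ => rfl

theorem pow_div_one_sub_pow_le {y : ℝ} {k c : ℕ} (hy0 : 0 ≤ y) (hy1 : y < 1) (hc : c < k) :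
    y ^ c / (1 - y ^ k) ≤ (1 - y)⁻¹ := by
  have hyk : y ^ k < 1 := pow_lt_one₀ hy0 hy1 (by omega)
  rw [← geom_sum_div_one_sub_pow hyk.ne]
  gcongr
  exact single_le_sum (f := (y ^ ·)) (fun m _ => pow_nonneg hy0 m) (mem_range.2 hc)

theorem lt_one_of_tsum_ofReal_pow_mul_ne_top {y b : ℝ} (hb : 0 < b)
    (h : ∑' n : ℕ, ENNReal.ofReal (y ^ n * b) ≠ ⊤) : y < 1 := by
  by_contra! hy
  refine h (top_le_iff.1 ?_)
  calc ⊤ = ∑' _ : ℕ, ENNReal.ofReal b :=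
        (ENNReal.tsum_const_eq_top_of_ne_zero (by simpa using hb)).symm
    _ ≤ ∑' n : ℕ, ENNReal.ofReal (y ^ n * b) :=
        ENNReal.tsum_le_tsum fun n =>
          ENNReal.ofReal_le_ofReal (le_mul_of_one_le_left hb.le (one_le_pow₀ hy))

theorem tsum_ofReal_pow_mul {y b : ℝ} (hy0 : 0 ≤ y) (hy1 : y < 1) (hb : 0 ≤ b) :
    ∑' n : ℕ, ENNReal.ofReal (y ^ n * b) = ENNReal.ofReal (b / (1 - y)) := by
  rw [← ENNReal.ofReal_tsum_of_nonneg (fun n => by positivity)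
    ((summable_geometric_of_lt_one hy0 hy1).mul_right b), tsum_mul_right,
    tsum_geometric_of_lt_one hy0 hy1, inv_mul_eq_div]

theorem Matrix.eq_sum_mul_colSum_of_mulVec_eq_smul {n R : Type*} [Fintype n] [CommSemiring R]
    {A : Matrix n n R} {c : n → R} (hc : ∀ j, ∑ i, A i j = c j) {r : R} {v : n → R}
    (hv : A *ᵥ v = r • v) (hv1 : ∑ i, v i = 1) : r = ∑ j, v j * c j :=
  calc r = 1 ⬝ᵥ (r • v) := by simp [one_dotProduct, hv1]
    _ = (1 ᵥ* A) ⬝ᵥ v := by rw [← hv, dotProduct_mulVec]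
    _ = ∑ j, v j * c j := by
        simp only [vecMul, dotProduct, Pi.one_apply, one_mul, hc]
        exact sum_congr rfl fun j _ => mul_comm _ _

section GeometricMoments

variable {μ : Measure ℝ} {z b : ℝ}

theorem tsum_mul_lintegral_pow_mul (hz : 0 ≤ z) :
    ∑' n : ℕ, ENNReal.ofReal (z ^ n) * ∫⁻ x, ENNReal.ofReal (x ^ n * b) ∂μ =
      ∫⁻ x, ∑' n : ℕ, ENNReal.ofReal ((z * x) ^ n * b) ∂μ := by
  rw [lintegral_tsum fun n => by fun_prop]
  congr 1 with n
  rw [← lintegral_const_mul' _ _ ENNReal.ofReal_ne_top]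
  congr 1 with x
  rw [← ENNReal.ofReal_mul (pow_nonneg hz n), mul_pow, mul_assoc]

theorem ae_mul_lt_one (hz : 0 ≤ z) (hb : 0 < b)
    (hfin : ∑' n : ℕ, ENNReal.ofReal (z ^ n) * ∫⁻ x, ENNReal.ofReal (x ^ n * b) ∂μ < ⊤) :
    ∀ᵐ x ∂μ, z * x < 1 := by
  rw [tsum_mul_lintegral_pow_mul hz] at hfin
  filter_upwards [ae_lt_top' (by fun_prop) hfin.ne] with x hx
  exact lt_one_of_tsum_ofReal_pow_mul_ne_top hb hx.ne

theorem integrable_div_one_sub_mul (hz : 0 ≤ z) (hb : 0 < b)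
    (hfin : ∑' n : ℕ, ENNReal.ofReal (z ^ n) * ∫⁻ x, ENNReal.ofReal (x ^ n * b) ∂μ < ⊤)
    (hμ : ∀ᵐ x ∂μ, 0 ≤ x) :
    Integrable (fun x => b / (1 - z * x)) μ := by
  have hlt := ae_mul_lt_one hz hb hfin
  refine ⟨Measurable.aestronglyMeasurable (by fun_prop), ?_⟩
  rw [hasFiniteIntegral_iff_ofReal]
  · rwa [lintegral_congr_ae, ← tsum_mul_lintegral_pow_mul hz]
    filter_upwards [hμ, hlt] with x hx0 hx1
    exact (tsum_ofReal_pow_mul (mul_nonneg hz hx0) hx1 hb.le).symm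
  · filter_upwards [hlt] with x hx
    exact div_nonneg hb.le (sub_pos.2 hx).le

theorem integrable_pow_div_one_sub_pow_mul (hz : 0 ≤ z) (hb : 0 < b)
    (hfin : ∑' n : ℕ, ENNReal.ofReal (z ^ n) * ∫⁻ x, ENNReal.ofReal (x ^ n * b) ∂μ < ⊤)
    (hμ : ∀ᵐ x ∂μ, 0 ≤ x) {c k : ℕ} (hc : c < k) :
    Integrable (fun x => (z * x) ^ c / (1 - (z * x) ^ k) * b) μ := by
  refine (integrable_div_one_sub_mul hz hb hfin hμ).mono
    (Measurable.aestronglyMeasurable (by fun_prop)) ?_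
  filter_upwards [hμ, ae_mul_lt_one hz hb hfin] with x hx0 hx1
  have hy0 := mul_nonneg hz hx0
  have hyk : (z * x) ^ k < 1 := pow_lt_one₀ hy0 hx1 (by omega)
  rw [Real.norm_of_nonneg (by have := sub_pos.2 hyk; positivity),
    Real.norm_of_nonneg (div_nonneg hb.le (sub_pos.2 hx1).le), div_eq_inv_mul b]
  exact mul_le_mul_of_nonneg_right (pow_div_one_sub_pow_le hy0 hx1 hc) hb.le

end GeometricMoments

theorem sum_Amat_apply_eq_rhoFun {k : ℕ} [NeZero k] {β : Fin k → ℝ} {q : Fin k → Measure ℝ}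
    {z : ℝ} (j : Fin k) (hβ : 0 < β j) (hq : ∀ᵐ x ∂q j, 0 ≤ x) (hz : memIm k β q z) :
    ∑ i, Amat k β q z i j = rhoFun k β q z j := by
  simp only [Amat, of_apply, rhoFun]
  rw [← integral_finsetSum _ fun i _ =>
    integrable_pow_div_one_sub_pow_mul hz.1 hβ (hz.2 j) hq (Fin.is_lt (i - j))]
  refine integral_congr_ae ?_
  filter_upwards [hq, ae_mul_lt_one hz.1 hβ (hz.2 j)] with x hx0 hx1
  have hyk : (z * x) ^ k < 1 := pow_lt_one₀ (mul_nonneg hz.1 hx0) hx1 (NeZero.ne k)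
  rw [← sum_mul, ← sum_div, Fin.sum_pow_sub_eq_sum_range, geom_sum_div_one_sub_pow hyk.ne,
    inv_mul_eq_div]

theorem stmt_7_general (k : ℕ) [NeZero k] (β : Fin k → ℝ) (q : Fin k → Measure ℝ)
    (hβ : ∀ i, β i ∈ Set.Ioo (0:ℝ) 1)
    (hq : ∀ i, q i (Set.Icc (0:ℝ) 1)ᶜ = 0)
    (z : ℝ) (hz : memIm k β q z)
    (r : ℝ) (R : Fin k → ℝ) (hnorm : ∑ i, R i = 1)
    (heig : (Amat k β q z).mulVec R = r • R) :
    (r - 1 < 0 ↔ (∑ i, R i * rhoFun k β q z i) - 1 < 0) ∧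
    (r - 1 = 0 ↔ (∑ i, R i * rhoFun k β q z i) - 1 = 0) ∧
    (0 < r - 1 ↔ 0 < (∑ i, R i * rhoFun k β q z i) - 1) := by
  have hq₀ : ∀ i, ∀ᵐ x ∂q i, 0 ≤ x := fun i => (ae_iff.2 (hq i)).mono fun _ hx => hx.1
  obtain rfl : r = ∑ i, R i * rhoFun k β q z i :=
    eq_sum_mul_colSum_of_mulVec_eq_smul
      (fun j => sum_Amat_apply_eq_rhoFun j (hβ j).1 (hq₀ j) hz) heig hnorm
  exact ⟨Iff.rfl, Iff.rfl, Iff.rfl⟩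

/-- For `z ∈ I_μ`, if `r` is a real eigenvalue of `A(z)` admitting an eigenvector
`R` with all coordinates positive, normalized so that `∑ i, R i = 1`, then `r − 1` and
`∑ i, R i * ρ_i(z) − 1` have the same sign (both negative, both null, or both positive). -/
theorem stmt_7 (k : ℕ) [NeZero k] (β : Fin k → ℝ) (q : Fin k → Measure ℝ)
    [∀ i, IsProbabilityMeasure (q i)]
    (hβ : ∀ i, β i ∈ Set.Ioo (0:ℝ) 1)
    (hq : ∀ i, q i (Set.Icc (0:ℝ) 1)ᶜ = 0)
    (hηq : ∀ i, 0 < etaSup (q i))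
    (z : ℝ) (hz : memIm k β q z)
    (r : ℝ) (R : Fin k → ℝ) (hR : ∀ i, 0 < R i) (hnorm : ∑ i, R i = 1)
    (heig : (Amat k β q z).mulVec R = r • R) :
    (r - 1 < 0 ↔ (∑ i, R i * rhoFun k β q z i) - 1 < 0) ∧
    (r - 1 = 0 ↔ (∑ i, R i * rhoFun k β q z i) - 1 = 0) ∧
    (0 < r - 1 ↔ 0 < (∑ i, R i * rhoFun k β q z i) - 1) :=
  stmt_7_general k β q hβ hq z hz r R hnorm heig
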